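/- arXiv:1707.06845 — 2 statements merged into one kernel-verified Lean document; each statement's English description precedes it below -/
import Mathlib

section
/- For every α ∈ (0,1) and every random variable X on (Ω,𝓕,P) with E[X^+] < ∞: ES_α[X] = F^←_X(α) + (1/(1−α))·E[(X − F^←_X(α))^+] = inf_{c ∈ ℝ} ( c + (1/(1−α))·E[(X−c)^+] ). -/
open MeasureTheory

/-- The distribution function `F_X(x) = P[X ≤ x]` of a random variable `X`. -/
noncomputable def distFun {Ω : Type*} [MeasurableSpace Ω] (P : Measure Ω) (X : Ω → ℝ) (x : ℝ) : ℝ :=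
  (P {ω | X ω ≤ x}).toReal

/-- The (lower) quantile function `F^←_X(u) = inf {x | F_X(x) ≥ u}`. -/
noncomputable def quantile {Ω : Type*} [MeasurableSpace Ω] (P : Measure Ω) (X : Ω → ℝ) (u : ℝ) : ℝ :=
  sInf {x : ℝ | u ≤ distFun P X x}

/-- The expected shortfall at level `α`:
`ES_α[X] = (1/(1-α)) ∫_{(α,1)} F^←_X(u) dλ(u)`, with values in `EReal`. -/
noncomputable def ES {Ω : Type*} [MeasurableSpace Ω] (P : Measure Ω) (α : ℝ) (X : Ω → ℝ) : EReal :=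
  ((1 / (1 - α) : ℝ) : EReal) *
    (((∫⁻ u in Set.Ioo α 1, ENNReal.ofReal (max (quantile P X u) 0)) : EReal)
      - ((∫⁻ u in Set.Ioo α 1, ENNReal.ofReal (max (-(quantile P X u)) 0)) : EReal))

/-!
Under Lebesgue measure on `(0,1)` the quantile function `q = F^←_X` has the law of `X`, so
`E[(X - c)⁺] = ∫₀¹ (q u - c)⁺ du ≥ ∫_α^1 (q u - c) du` for every `c`, with equality at
`c = q α` because `q ≤ q α` on `(0, α]`. Dividing by `1 - α` and adding `c` turns this into
`ES_α[X] ≤ c + E[(X - c)⁺]/(1 - α)`, with equality at `c = q α`.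
-/

open ProbabilityTheory Set

section Integral

variable {β : Type*} [MeasurableSpace β] {μ : Measure β} {f : β → ℝ}

lemma integral_le_toReal_lintegral_ofReal (hf : Integrable f μ) :
    ∫ x, f x ∂μ ≤ (∫⁻ x, ENNReal.ofReal (f x) ∂μ).toReal := by
  rw [integral_eq_lintegral_pos_part_sub_lintegral_neg_part hf]
  exact sub_le_self _ ENNReal.toReal_nonneg

lemma coe_integral_eq_lintegral_sub_lintegral (hf : Integrable f μ) :
    ((∫ x, f x ∂μ : ℝ) : EReal) =
      (∫⁻ x, ENNReal.ofReal (f x) ∂μ : EReal) -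
        (∫⁻ x, ENNReal.ofReal (-f x) ∂μ : EReal) := by
  rw [integral_eq_lintegral_pos_part_sub_lintegral_neg_part hf, EReal.coe_sub,
    EReal.coe_ennreal_toReal hf.lintegral_lt_top.ne]
  exact congrArg _ (EReal.coe_ennreal_toReal hf.neg.lintegral_lt_top.ne)

lemma lintegral_ofReal_sub_lt_top [IsFiniteMeasure μ]
    (hf : ∫⁻ x, ENNReal.ofReal (f x) ∂μ < ⊤) (c : ℝ) :
    ∫⁻ x, ENNReal.ofReal (f x - c) ∂μ < ⊤ :=
  calc ∫⁻ x, ENNReal.ofReal (f x - c) ∂μ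
      ≤ ∫⁻ x, (ENNReal.ofReal (f x) + ENNReal.ofReal (-c)) ∂μ :=
        lintegral_mono fun x ↦ by rw [sub_eq_add_neg]; exact ENNReal.ofReal_add_le
    _ = ∫⁻ x, ENNReal.ofReal (f x) ∂μ + ENNReal.ofReal (-c) * μ univ := by
        rw [lintegral_add_right _ measurable_const, lintegral_const]
    _ < ⊤ := ENNReal.add_lt_top.2
        ⟨hf, ENNReal.mul_lt_top ENNReal.ofReal_lt_top (measure_lt_top _ _)⟩

end Integral

lemma sInf_le_iff_le_cdf (μ : Measure ℝ) {u x : ℝ} (hu : u ∈ Ioo (0 : ℝ) 1) :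
    sInf {y | u ≤ cdf μ y} ≤ x ↔ u ≤ cdf μ x := by
  set S := {y | u ≤ cdf μ y}
  obtain ⟨a, ha⟩ := ((tendsto_cdf_atBot μ).eventually_lt_const hu.1).exists
  have hS : S.Nonempty := ((tendsto_cdf_atTop μ).eventually_const_le hu.2).exists
  have hbdd : BddBelow S := ⟨a, fun y hy ↦ ((monotone_cdf μ).reflect_lt (ha.trans_le hy)).le⟩
  refine ⟨fun h ↦ ?_, fun h ↦ csInf_le hbdd h⟩
  -- right-continuity of the cdf puts `sInf S` itself in `S`
  have hmem : u ≤ cdf μ (sInf S) := by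
    refine ge_of_tendsto ((cdf μ).right_continuous _ |>.mono Ioi_subset_Ici_self) ?_
    filter_upwards [self_mem_nhdsWithin] with y hy
    obtain ⟨s, hs, hsy⟩ := exists_lt_of_csInf_lt hS hy
    exact hs.trans (monotone_cdf μ hsy.le)
  exact hmem.trans (monotone_cdf μ h)

lemma volume_Ioo_inter_Iic {y : ℝ} (h0 : 0 ≤ y) (h1 : y ≤ 1) :
    volume (Ioo 0 1 ∩ Iic y) = ENNReal.ofReal y := by
  rcases h1.lt_or_eq with h1 | rfl
  · have : Ioo 0 1 ∩ Iic y = Ioc 0 y := by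
      ext u; simp only [mem_inter_iff, mem_Ioo, mem_Iic, mem_Ioc]; grind
    rw [this, Real.volume_Ioc, sub_zero]
  · rw [inter_eq_left.2 fun u hu ↦ hu.2.le, Real.volume_Ioo, sub_zero]

section Quantile

variable {Ω : Type*} [MeasurableSpace Ω] (P : Measure Ω) {X : Ω → ℝ} {α : ℝ}

lemma distFun_eq_cdf_map [IsProbabilityMeasure P] (hX : AEMeasurable X P) :
    distFun P X = cdf (P.map X) := by
  have := Measure.isProbabilityMeasure_map hX
  funext x
  rw [distFun, cdf_eq_real, measureReal_def, Measure.map_apply_of_aemeasurable hX measurableSet_Iic]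
  rfl

variable [IsProbabilityMeasure P]

lemma quantile_le_iff (hX : AEMeasurable X P) {u x : ℝ} (hu : u ∈ Ioo (0 : ℝ) 1) :
    quantile P X u ≤ x ↔ u ≤ distFun P X x := by
  rw [quantile, distFun_eq_cdf_map P hX]
  exact sInf_le_iff_le_cdf _ hu

lemma le_distFun_quantile (hX : AEMeasurable X P) {u : ℝ} (hu : u ∈ Ioo (0 : ℝ) 1) :
    u ≤ distFun P X (quantile P X u) :=
  (quantile_le_iff P hX hu).1 le_rfl

lemma monotoneOn_quantile (hX : AEMeasurable X P) : MonotoneOn (quantile P X) (Ioo 0 1) :=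
  fun _ hu _ hv huv ↦ (quantile_le_iff P hX hu).2 (huv.trans (le_distFun_quantile P hX hv))

lemma aemeasurable_quantile (hX : AEMeasurable X P) {s : Set ℝ} (hs : s ⊆ Ioo 0 1) :
    AEMeasurable (quantile P X) (volume.restrict s) :=
  (aemeasurable_restrict_of_monotoneOn measurableSet_Ioo (monotoneOn_quantile P hX)).mono_measure
    (Measure.restrict_mono hs le_rfl)

theorem map_quantile_volume_Ioo (hX : AEMeasurable X P) :
    (volume.restrict (Ioo 0 1)).map (quantile P X) = P.map X := by
  have := Measure.isProbabilityMeasure_map hX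
  refine (Measure.ext_of_Iic _ _ fun x ↦ ?_).symm
  have hpre : quantile P X ⁻¹' Iic x ∩ Ioo 0 1 = Ioo 0 1 ∩ Iic (distFun P X x) := by
    ext u
    simp only [mem_inter_iff, mem_preimage, mem_Iic]
    exact ⟨fun h ↦ ⟨h.2, (quantile_le_iff P hX h.2).1 h.1⟩,
      fun h ↦ ⟨(quantile_le_iff P hX h.1).2 h.2, h.1⟩⟩
  rw [Measure.map_apply_of_aemeasurable (aemeasurable_quantile P hX subset_rfl) measurableSet_Iic,
    Measure.restrict_apply' measurableSet_Ioo, hpre, distFun_eq_cdf_map P hX,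
    volume_Ioo_inter_Iic (cdf_nonneg _ x) (cdf_le_one _ x), ofReal_cdf]

theorem lintegral_comp_quantile (hX : AEMeasurable X P) {g : ℝ → ENNReal} (hg : Measurable g) :
    ∫⁻ u in Ioo 0 1, g (quantile P X u) = ∫⁻ ω, g (X ω) ∂P := by
  rw [← lintegral_map' hg.aemeasurable (aemeasurable_quantile P hX subset_rfl),
    map_quantile_volume_Ioo P hX, lintegral_map' hg.aemeasurable hX]

lemma setLIntegral_Ioo_ofReal_quantile_sub (hX : AEMeasurable X P) (hα : α ∈ Ioo (0 : ℝ) 1)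
    {c : ℝ} (hc : quantile P X α ≤ c) :
    ∫⁻ u in Ioo α 1, ENNReal.ofReal (quantile P X u - c) =
      ∫⁻ ω, ENNReal.ofReal (X ω - c) ∂P := by
  have hzero : ∫⁻ u in Ioc 0 α, ENNReal.ofReal (quantile P X u - c) = 0 := by
    rw [setLIntegral_congr_fun measurableSet_Ioc (g := fun _ ↦ 0) fun u hu ↦ ?_, lintegral_zero]
    have hu' : u ≤ distFun P X c := hu.2.trans ((quantile_le_iff P hX hα).1 hc)
    exact ENNReal.ofReal_eq_zero.2
      (sub_nonpos.2 ((quantile_le_iff P hX ⟨hu.1, hu.2.trans_lt hα.2⟩).2 hu'))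
  have hdisj : Disjoint (Ioc 0 α) (Ioo α 1) :=
    disjoint_left.2 fun _ h₁ h₂ ↦ h₂.1.not_ge h₁.2
  rw [← lintegral_comp_quantile P hX (g := fun x ↦ ENNReal.ofReal (x - c)) (by fun_prop),
    ← Ioc_union_Ioo_eq_Ioo hα.1.le hα.2, lintegral_union measurableSet_Ioo hdisj, hzero,
    zero_add]

lemma setLIntegral_Ioo_ofReal_quantile_sub_le (hX : AEMeasurable X P) (hα : 0 ≤ α) (c : ℝ) :
    ∫⁻ u in Ioo α 1, ENNReal.ofReal (quantile P X u - c) ≤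
      ∫⁻ ω, ENNReal.ofReal (X ω - c) ∂P := by
  rw [← lintegral_comp_quantile P hX (g := fun x ↦ ENNReal.ofReal (x - c)) (by fun_prop)]
  exact lintegral_mono_set (Ioo_subset_Ioo_left hα)

lemma ae_restrict_quantile_sub_quantile_nonneg (hX : AEMeasurable X P)
    (hα : α ∈ Ioo (0 : ℝ) 1) :
    0 ≤ᵐ[volume.restrict (Ioo α 1)] fun u ↦ quantile P X u - quantile P X α :=
  (ae_restrict_iff' measurableSet_Ioo).2 <| ae_of_all _ fun _ hu ↦
    sub_nonneg.2 (monotoneOn_quantile P hX hα ⟨hα.1.trans hu.1, hu.2⟩ hu.1.le)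

lemma setIntegral_Ioo_quantile_sub_quantile (hX : AEMeasurable X P)
    (hα : α ∈ Ioo (0 : ℝ) 1) :
    ∫ u in Ioo α 1, (quantile P X u - quantile P X α) =
      (∫⁻ ω, ENNReal.ofReal (X ω - quantile P X α) ∂P).toReal := by
  rw [integral_eq_lintegral_of_nonneg_ae (ae_restrict_quantile_sub_quantile_nonneg P hX hα)
    ((aemeasurable_quantile P hX (Ioo_subset_Ioo_left hα.1.le)).sub_const _).aestronglyMeasurable,
    setLIntegral_Ioo_ofReal_quantile_sub P hX hα le_rfl]

lemma integrableOn_quantile (hX : AEMeasurable X P)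
    (hXpos : ∫⁻ ω, ENNReal.ofReal (X ω) ∂P < ⊤) (hα : α ∈ Ioo (0 : ℝ) 1) :
    IntegrableOn (quantile P X) (Ioo α 1) := by
  have hsub : IntegrableOn (fun u ↦ quantile P X u - quantile P X α) (Ioo α 1) := by
    have hmeas := (aemeasurable_quantile P hX (Ioo_subset_Ioo_left hα.1.le)).sub_const
      (quantile P X α)
    refine ⟨hmeas.aestronglyMeasurable,
      (hasFiniteIntegral_iff_ofReal (ae_restrict_quantile_sub_quantile_nonneg P hX hα)).2 ?_⟩
    rw [setLIntegral_Ioo_ofReal_quantile_sub P hX hα le_rfl]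
    exact lintegral_ofReal_sub_lt_top hXpos _
  exact (hsub.add (integrableOn_const (C := quantile P X α) measure_Ioo_lt_top.ne)).congr_fun
    (fun u _ ↦ sub_add_cancel _ _) measurableSet_Ioo

lemma setIntegral_Ioo_quantile_sub_le (hX : AEMeasurable X P)
    (hXpos : ∫⁻ ω, ENNReal.ofReal (X ω) ∂P < ⊤) (hα : α ∈ Ioo (0 : ℝ) 1) (c : ℝ) :
    ∫ u in Ioo α 1, (quantile P X u - c) ≤
      (∫⁻ ω, ENNReal.ofReal (X ω - c) ∂P).toReal :=
  (integral_le_toReal_lintegral_ofReal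
    ((integrableOn_quantile P hX hXpos hα).sub (integrableOn_const measure_Ioo_lt_top.ne))).trans
    (ENNReal.toReal_mono (lintegral_ofReal_sub_lt_top hXpos c).ne
      (setLIntegral_Ioo_ofReal_quantile_sub_le P hX hα.1.le c))

end Quantile

/-- For every `α ∈ (0,1)` and every `X` with `E[X⁺] < ∞`:
`ES_α[X] = F^←_X(α) + (1/(1-α))·E[(X - F^←_X(α))⁺] = inf_{c ∈ ℝ} (c + (1/(1-α))·E[(X-c)⁺])`. -/
theorem ES_eq_quantile_add_and_iInf {Ω : Type*} [MeasurableSpace Ω]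
    (P : Measure Ω) [IsProbabilityMeasure P]
    (α : ℝ) (hα : α ∈ Set.Ioo (0:ℝ) 1) (X : Ω → ℝ) (hX : Measurable X)
    (hXpos : (∫⁻ ω, ENNReal.ofReal (max (X ω) 0) ∂P) < ⊤) :
    ES P α X
        = ((quantile P X α : ℝ) : EReal)
          + ((1 / (1 - α) : ℝ) : EReal)
            * ((∫⁻ ω, ENNReal.ofReal (max (X ω - quantile P X α) 0) ∂P) : EReal) ∧
    ES P α X
        = ⨅ c : ℝ, (((c : ℝ) : EReal)
          + ((1 / (1 - α) : ℝ) : EReal)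
            * ((∫⁻ ω, ENNReal.ofReal (max (X ω - c) 0) ∂P) : EReal)) := by
  simp only [ES, ENNReal.ofReal_max, ENNReal.ofReal_zero, zero_le, sup_of_le_left] at hXpos ⊢
  have hint := integrableOn_quantile P hX.aemeasurable hXpos hα
  have hk : 0 ≤ 1 / (1 - α) := one_div_nonneg.2 (sub_nonneg.2 hα.2.le)
  set I : ℝ → ℝ := fun c ↦ (∫⁻ ω, ENNReal.ofReal (X ω - c) ∂P).toReal
  have hobj (c : ℝ) :
      (c : EReal) + (1 / (1 - α) : ℝ) * (∫⁻ ω, ENNReal.ofReal (X ω - c) ∂P : EReal) =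
        ((c + 1 / (1 - α) * I c : ℝ) : EReal) := by
    rw [← EReal.coe_ennreal_toReal (lintegral_ofReal_sub_lt_top hXpos c).ne]
    norm_cast
  have hsplit (c : ℝ) : 1 / (1 - α) * ∫ u in Ioo α 1, quantile P X u
      = c + 1 / (1 - α) * ∫ u in Ioo α 1, (quantile P X u - c) := by
    rw [integral_sub hint (integrableOn_const measure_Ioo_lt_top.ne), setIntegral_const,
      smul_eq_mul, Real.volume_real_Ioo_of_le hα.2.le]
    field_simp [sub_ne_zero.2 hα.2.ne']
    ring
  have hle (c : ℝ) :
      1 / (1 - α) * ∫ u in Ioo α 1, quantile P X u ≤ c + 1 / (1 - α) * I c := by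
    rw [hsplit c]
    gcongr
    exact setIntegral_Ioo_quantile_sub_le P hX.aemeasurable hXpos hα c
  have heq : 1 / (1 - α) * ∫ u in Ioo α 1, quantile P X u
      = quantile P X α + 1 / (1 - α) * I (quantile P X α) := by
    rw [hsplit, setIntegral_Ioo_quantile_sub_quantile P hX.aemeasurable hα]
  rw [← coe_integral_eq_lintegral_sub_lintegral hint, ← EReal.coe_mul, heq]
  refine ⟨(hobj _).symm, ?_⟩
  simp_rw [hobj]
  exact le_antisymm (le_iInf fun c ↦ EReal.coe_le_coe_iff.2 (heq ▸ hle c)) (iInf_le _ _)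
end

section
/- If the distortion function D is convex, then 𝓛_Q^Pichler ⊆ 𝓛_Q^Acerbi, where 𝓛_Q^Acerbi := {X | ∫_{(0,1)} |F^←_X(u)| dQ(u) < ∞} and 𝓛_Q^Pichler := {X | ∫_{(0,1)} F^←_{|X|}(u) dQ(u) < ∞}. -/
open MeasureTheory

/-- A distortion function: an increasing, right-continuous `D : [0,1] → [0,1]`
with `D 0 = 0` and `sup_{u ∈ (0,1)} D u = 1`. -/
structure IsDistortion (D : ℝ → ℝ) : Prop where
  mapsTo : ∀ u ∈ Set.Icc (0:ℝ) 1, D u ∈ Set.Icc (0:ℝ) 1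
  mono : ∀ ⦃a b : ℝ⦄, 0 ≤ a → a ≤ b → b ≤ 1 → D a ≤ D b
  rightCont : ∀ u ∈ Set.Ico (0:ℝ) 1, ContinuousWithinAt D (Set.Icc u 1) u
  zero : D 0 = 0
  sup_one : sSup (D '' Set.Ioo 0 1) = 1

/-- `Q` is the probability measure on the Borel sets of `(0,1)` corresponding to
the distortion function `D`, i.e. `Q (a,b] = D b - D a` for `0 < a ≤ b < 1`. -/
def IsCorresponding (D : ℝ → ℝ) (Q : Measure ℝ) : Prop :=
  IsProbabilityMeasure Q ∧ Q (Set.Ioo (0:ℝ) 1) = 1 ∧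
    ∀ a b : ℝ, 0 < a → a ≤ b → b < 1 → Q (Set.Ioc a b) = ENNReal.ofReal (D b - D a)

/-!
Write `g = F^←_{|X|}`. Since `X ≤ |X|`, and `{X ≤ x}` is disjoint from `{|X| ≤ y}` when
`x < -y`, we get `-g(v) ≤ F^←_X(u) ≤ g(u)` whenever `u + v > 1`, so
`|F^←_X(u)| ≤ g(u) + g(1 - u/2)`.
Convexity together with `D 0 = 0` and `D 1 = 1` gives `D u ≤ u`, i.e. `Q[(0,s]] ≤ s` and
`Q[(c,1)] ≥ 1 - c`. As `g` is increasing, its superlevel sets are final segments of `(0,1)`, and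
these two bounds give `Q[g(1 - u/2) > t] ≤ 2 Q[g(u) > t]` for every `t`; integrating over `t`
(layer cake) yields `∫ g(1 - u/2) dQ ≤ 2 ∫ g dQ`.
-/

open Set Filter Topology ProbabilityTheory

lemma one_sub_half_mem_Ioo {u : ℝ} (hu : u ∈ Ioo (0 : ℝ) 1) : 1 - u / 2 ∈ Ioo (0 : ℝ) 1 :=
  ⟨by linarith [hu.2], by linarith [hu.1]⟩

section Quantile

variable {Ω : Type*} [MeasurableSpace Ω] {P : Measure Ω} {X Y : Ω → ℝ} {u v : ℝ}

lemma quantile_nonneg (hY : ∀ ω, 0 ≤ Y ω) (hu : 0 < u) : 0 ≤ quantile P Y u := by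
  refine Real.sInf_nonneg fun x hx => ?_
  by_contra! hx0
  have hempty : {ω | Y ω ≤ x} = ∅ := eq_empty_of_forall_notMem fun ω hω => by
    linarith [hY ω, show Y ω ≤ x from hω]
  have hx' : u ≤ distFun P Y x := hx
  simp only [distFun, hempty, measure_empty, ENNReal.toReal_zero] at hx'
  linarith

variable [IsProbabilityMeasure P]

lemma distFun_eq_cdf (hX : Measurable X) : distFun P X = cdf (P.map X) := by
  have := Measure.isProbabilityMeasure_map (μ := P) hX.aemeasurable
  ext x
  rw [cdf_eq_real, measureReal_def, Measure.map_apply hX measurableSet_Iic]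
  rfl

lemma monotone_distFun : Monotone (distFun P X) := fun _ _ hxy =>
  measureReal_mono fun _ (hω : _ ≤ _) => hω.trans hxy

lemma bddBelow_setOf_le_distFun (hX : Measurable X) (hu : 0 < u) :
    BddBelow {x | u ≤ distFun P X x} := by
  have hlim := distFun_eq_cdf (P := P) hX ▸ tendsto_cdf_atBot (P.map X)
  obtain ⟨x₀, hx₀⟩ := (hlim.eventually (Iio_mem_nhds hu)).exists
  refine ⟨x₀, fun x (hx : u ≤ _) => ?_⟩
  by_contra! hlt
  exact (hx.trans (monotone_distFun hlt.le)).not_gt hx₀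

lemma nonempty_setOf_le_distFun (hX : Measurable X) (hu : u < 1) :
    {x | u ≤ distFun P X x}.Nonempty := by
  have hlim := distFun_eq_cdf (P := P) hX ▸ tendsto_cdf_atTop (P.map X)
  exact (hlim.eventually (Ici_mem_nhds hu)).exists

lemma quantile_le_quantile_of_distFun_le (hX : Measurable X) (hY : Measurable Y)
    (h : ∀ x, distFun P Y x ≤ distFun P X x) (hu : u ∈ Ioo (0 : ℝ) 1) :
    quantile P X u ≤ quantile P Y u :=
  csInf_le_csInf (bddBelow_setOf_le_distFun hX hu.1) (nonempty_setOf_le_distFun hY hu.2)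
    fun x (hx : u ≤ _) => hx.trans (h x)

lemma quantile_monotoneOn (hX : Measurable X) : MonotoneOn (quantile P X) (Ioo 0 1) :=
  fun _ hu _ hv huv => csInf_le_csInf (bddBelow_setOf_le_distFun hX hu.1)
    (nonempty_setOf_le_distFun hX hv.2) fun _ hx => huv.trans hx

lemma distFun_add_distFun_abs_le_one (hX : Measurable X) {x y : ℝ} (hxy : x < -y) :
    distFun P X x + distFun P (fun ω => |X ω|) y ≤ 1 := by
  have hdisj : Disjoint {ω | X ω ≤ x} {ω | |X ω| ≤ y} :=
    disjoint_left.2 fun ω (h₁ : X ω ≤ x) (h₂ : |X ω| ≤ y) => by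
      linarith [neg_abs_le (X ω)]
  calc distFun P X x + distFun P (fun ω => |X ω|) y
      = P.real ({ω | X ω ≤ x} ∪ {ω | |X ω| ≤ y}) :=
        (measureReal_union hdisj (measurableSet_le hX.abs measurable_const)).symm
    _ ≤ 1 := measureReal_le_one

lemma neg_quantile_abs_le_quantile (hX : Measurable X) (hu : u ∈ Ioo (0 : ℝ) 1)
    (hv : v ∈ Ioo (0 : ℝ) 1) (huv : 1 < u + v) :
    -quantile P (fun ω => |X ω|) v ≤ quantile P X u := by
  refine le_csInf (nonempty_setOf_le_distFun hX hu.2) fun x (hx : u ≤ _) => neg_le.2 ?_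
  refine le_csInf (nonempty_setOf_le_distFun hX.abs hv.2) fun y (hy : v ≤ _) => ?_
  by_contra! hyx
  linarith [distFun_add_distFun_abs_le_one (P := P) hX (show x < -y by linarith)]

lemma abs_quantile_le (hX : Measurable X) (hu : u ∈ Ioo (0 : ℝ) 1) :
    |quantile P X u| ≤
      quantile P (fun ω => |X ω|) u + quantile P (fun ω => |X ω|) (1 - u / 2) := by
  have hu' := one_sub_half_mem_Ioo hu
  have hle := quantile_le_quantile_of_distFun_le (P := P) hX hX.abs
    (fun x => measureReal_mono fun ω (h : |X ω| ≤ x) => (le_abs_self _).trans h) hu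
  have hge := neg_quantile_abs_le_quantile (P := P) hX hu hu' (by linarith [hu.1])
  have h₁ := quantile_nonneg (P := P) (fun ω => abs_nonneg (X ω)) hu.1
  have h₂ := quantile_nonneg (P := P) (fun ω => abs_nonneg (X ω)) hu'.1
  exact abs_le.2 ⟨by linarith, by linarith⟩

end Quantile

namespace IsDistortion

variable {D : ℝ → ℝ}

lemma map_one (hD : IsDistortion D) : D 1 = 1 := by
  have hsup : sSup (D '' Ioo 0 1) ≤ D 1 :=
    csSup_le ⟨D (1 / 2), mem_image_of_mem D (by norm_num)⟩ fun _ ⟨w, hw, hDw⟩ =>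
      hDw ▸ hD.mono hw.1.le hw.2.le le_rfl
  rw [hD.sup_one] at hsup
  exact le_antisymm (hD.mapsTo 1 ⟨zero_le_one, le_rfl⟩).2 hsup

lemma le_self_of_convexOn (hD : IsDistortion D) (hconv : ConvexOn ℝ (Icc (0 : ℝ) 1) D)
    {u : ℝ} (hu : u ∈ Icc (0 : ℝ) 1) : D u ≤ u := by
  have h := hconv.2 (left_mem_Icc.2 zero_le_one) (right_mem_Icc.2 zero_le_one)
    (sub_nonneg.2 hu.2) hu.1 (sub_add_cancel 1 u)
  simpa [hD.zero, hD.map_one] using h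

end IsDistortion

namespace IsCorresponding

variable {D : ℝ → ℝ} {Q : Measure ℝ}

lemma isProbabilityMeasure_restrict (hQ : IsCorresponding D Q) :
    IsProbabilityMeasure (Q.restrict (Ioo 0 1)) :=
  ⟨by rw [Measure.restrict_apply_univ, hQ.2.1]⟩

lemma measure_Ioc_zero_le (hQ : IsCorresponding D Q) (hD : IsDistortion D) {s : ℝ}
    (hs : s ∈ Ioo (0 : ℝ) 1) : Q (Ioc 0 s) ≤ ENNReal.ofReal (D s) := by
  have := hQ.1
  have hempty : ⋂ r > (0 : ℝ), Ioc 0 r = ∅ := eq_empty_of_forall_notMem fun x hx => by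
    have hx₀ : 0 < x := (mem_iInter₂.1 hx 1 one_pos).1
    linarith [(mem_iInter₂.1 hx (x / 2) (half_pos hx₀)).2]
  have hlim : Tendsto (fun r => Q (Ioc 0 r) + ENNReal.ofReal (D s)) (𝓝[>] 0)
      (𝓝 (ENNReal.ofReal (D s))) := by
    have h := tendsto_measure_biInter_gt (μ := Q) (a := (0 : ℝ)) (s := fun r => Ioc 0 r)
      (fun _ _ => measurableSet_Ioc.nullMeasurableSet)
      (fun _ _ _ hij => Ioc_subset_Ioc_right hij) ⟨1, one_pos, measure_ne_top Q _⟩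
    rw [hempty, measure_empty] at h
    simpa using h.add_const (ENNReal.ofReal (D s))
  refine ge_of_tendsto hlim ?_
  filter_upwards [Ioc_mem_nhdsGT hs.1] with r hr
  calc Q (Ioc 0 s) ≤ Q (Ioc 0 r) + Q (Ioc r s) := by
        rw [← Ioc_union_Ioc_eq_Ioc hr.1.le hr.2]
        exact measure_union_le _ _
    _ = Q (Ioc 0 r) + ENNReal.ofReal (D s - D r) := by rw [hQ.2.2 r s hr.1 hr.2 hs.2]
    _ ≤ Q (Ioc 0 r) + ENNReal.ofReal (D s) := by
        gcongr
        linarith [(hD.mapsTo r ⟨hr.1.le, hr.2.trans hs.2.le⟩).1]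

lemma restrict_Iic_le (hQ : IsCorresponding D Q) (hD : IsDistortion D)
    (hconv : ConvexOn ℝ (Icc (0 : ℝ) 1) D) (s : ℝ) :
    Q.restrict (Ioo 0 1) (Iic s) ≤ ENNReal.ofReal s := by
  have := hQ.isProbabilityMeasure_restrict
  rcases le_or_gt 1 s with hs1 | hs1
  · exact prob_le_one.trans (ENNReal.one_le_ofReal.2 hs1)
  rw [Measure.restrict_apply measurableSet_Iic]
  calc Q (Iic s ∩ Ioo 0 1) ≤ Q (Ioc 0 s) := measure_mono fun x hx => ⟨hx.2.1, hx.1⟩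
    _ ≤ ENNReal.ofReal s := by
        rcases le_or_gt s 0 with hs0 | hs0
        · simp [Ioc_eq_empty_of_le hs0]
        · exact (hQ.measure_Ioc_zero_le hD ⟨hs0, hs1⟩).trans
            (ENNReal.ofReal_le_ofReal (hD.le_self_of_convexOn hconv ⟨hs0.le, hs1.le⟩))

end IsCorresponding

lemma lintegral_ofReal_le_mul_of_measure_lt_le {α : Type*} [MeasurableSpace α]
    {μ : Measure α} {f h : α → ℝ} (c : ENNReal) (hf : 0 ≤ᵐ[μ] f) (hfm : AEMeasurable f μ)
    (hh : 0 ≤ᵐ[μ] h) (hhm : AEMeasurable h μ) (hle : ∀ t, μ {x | t < h x} ≤ c * μ {x | t < f x}) :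
    ∫⁻ x, ENNReal.ofReal (h x) ∂μ ≤ c * ∫⁻ x, ENNReal.ofReal (f x) ∂μ := by
  have hanti : Antitone fun t => μ {x | t < f x} :=
    fun _ _ hst => measure_mono fun _ (hx : _ < _) => hst.trans_lt hx
  rw [lintegral_eq_lintegral_meas_lt μ hh hhm, lintegral_eq_lintegral_meas_lt μ hf hfm,
    ← lintegral_const_mul c hanti.measurable]
  exact lintegral_mono hle

section DominatedByUniform

variable {μ : Measure ℝ} [IsProbabilityMeasure μ] (hμ : ∀ᵐ u ∂μ, u ∈ Ioo (0 : ℝ) 1)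
  (hcdf : ∀ s, μ (Iic s) ≤ ENNReal.ofReal s)
include hμ hcdf

lemma ofReal_one_sub_le_measure_Ioo {c : ℝ} (hc : 0 ≤ c) :
    ENNReal.ofReal (1 - c) ≤ μ (Ioo c 1) :=
  calc ENNReal.ofReal (1 - c) = 1 - ENNReal.ofReal c := by
        rw [ENNReal.ofReal_sub 1 hc, ENNReal.ofReal_one]
    _ ≤ 1 - μ (Iic c) := tsub_le_tsub_left (hcdf c) 1
    _ = μ (Ioi c) := by rw [← compl_Iic, prob_compl_eq_one_sub measurableSet_Iic]
    _ ≤ μ (Ioo c 1) := measure_mono_ae (hμ.mono fun _ hu hc => ⟨hc, hu.2⟩)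

lemma measure_lt_comp_one_sub_half_le {g : ℝ → ℝ} (hg : MonotoneOn g (Ioo 0 1)) (t : ℝ) :
    μ {u | t < g (1 - u / 2)} ≤ 2 * μ {u | t < g u} := by
  set A := {w ∈ Ioo (0 : ℝ) 1 | t < g w}
  rcases A.eq_empty_or_nonempty with hA | hA
  · have hzero : μ {u | t < g (1 - u / 2)} = 0 := measure_eq_zero_iff_ae_notMem.2 <|
      hμ.mono fun u hu ht => (eq_empty_iff_forall_notMem.1 hA) _ ⟨one_sub_half_mem_Ioo hu, ht⟩
    simp [hzero]
  set c := sInf A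
  have hA₀ : ∀ w ∈ A, 0 ≤ w := fun w hw => hw.1.1.le
  have hc₀ : 0 ≤ c := le_csInf hA hA₀
  have hAc : Ioo c 1 ⊆ {u | t < g u} := fun w hw => by
    obtain ⟨a, ha, hac⟩ := exists_lt_of_csInf_lt hA hw.1
    exact ha.2.trans_le (hg ha.1 ⟨hc₀.trans_lt hw.1, hw.2⟩ hac.le)
  have hlevel : {u | t < g (1 - u / 2)} ≤ᵐ[μ] Iic (2 - 2 * c) := hμ.mono fun u hu ht => by
    have := csInf_le ⟨0, hA₀⟩ (⟨one_sub_half_mem_Ioo hu, ht⟩ : 1 - u / 2 ∈ A)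
    show u ≤ 2 - 2 * c
    linarith
  calc μ {u | t < g (1 - u / 2)} ≤ μ (Iic (2 - 2 * c)) := measure_mono_ae hlevel
    _ ≤ ENNReal.ofReal (2 * (1 - c)) := by rw [mul_one_sub]; exact hcdf _
    _ = 2 * ENNReal.ofReal (1 - c) := by rw [ENNReal.ofReal_mul zero_le_two, ENNReal.ofReal_ofNat]
    _ ≤ 2 * μ {u | t < g u} := by
        gcongr
        exact (ofReal_one_sub_le_measure_Ioo hμ hcdf hc₀).trans (measure_mono hAc)

lemma lintegral_comp_one_sub_half_le {g : ℝ → ℝ} (hg : MonotoneOn g (Ioo 0 1))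
    (hg₀ : ∀ u ∈ Ioo (0 : ℝ) 1, 0 ≤ g u) :
    ∫⁻ u, ENNReal.ofReal (g (1 - u / 2)) ∂μ ≤ 2 * ∫⁻ u, ENNReal.ofReal (g u) ∂μ := by
  have hrestrict : μ.restrict (Ioo 0 1) = μ := Measure.restrict_eq_self_of_ae_mem hμ
  have hgm : AEMeasurable g μ :=
    hrestrict ▸ aemeasurable_restrict_of_monotoneOn measurableSet_Ioo hg
  have hg'm : AEMeasurable (fun u => g (1 - u / 2)) μ :=
    hrestrict ▸ aemeasurable_restrict_of_antitoneOn measurableSet_Ioo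
      fun u hu v hv huv => hg (one_sub_half_mem_Ioo hv) (one_sub_half_mem_Ioo hu) (by linarith)
  exact lintegral_ofReal_le_mul_of_measure_lt_le 2 (hμ.mono hg₀) hgm
    (hμ.mono fun u hu => hg₀ _ (one_sub_half_mem_Ioo hu)) hg'm
    (measure_lt_comp_one_sub_half_le hμ hcdf hg)

end DominatedByUniform

/-- If `D` is convex, then `𝓛_Q^Pichler ⊆ 𝓛_Q^Acerbi`:
`∫_{(0,1)} F^←_{|X|}(u) dQ(u) < ∞` implies `∫_{(0,1)} |F^←_X(u)| dQ(u) < ∞`. -/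
theorem pichler_subset_acerbi_of_convex {Ω : Type*} [MeasurableSpace Ω]
    (P : Measure Ω) [IsProbabilityMeasure P] (D : ℝ → ℝ) (Q : Measure ℝ)
    (hD : IsDistortion D) (hQ : IsCorresponding D Q)
    (hconv : ConvexOn ℝ (Set.Icc (0:ℝ) 1) D) :
    ∀ X : Ω → ℝ, Measurable X →
      (∫⁻ u in Set.Ioo (0:ℝ) 1, ENNReal.ofReal (quantile P (fun ω => |X ω|) u) ∂Q) < ⊤ →
      (∫⁻ u in Set.Ioo (0:ℝ) 1, ENNReal.ofReal |quantile P X u| ∂Q) < ⊤ := by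
  intro X hX hint
  have := hQ.isProbabilityMeasure_restrict
  have hμ : ∀ᵐ u ∂Q.restrict (Ioo 0 1), u ∈ Ioo (0 : ℝ) 1 :=
    ae_restrict_mem measurableSet_Ioo
  set g := quantile P (fun ω => |X ω|)
  have hg : MonotoneOn g (Ioo 0 1) := quantile_monotoneOn hX.abs
  have hg₀ : ∀ u ∈ Ioo (0 : ℝ) 1, 0 ≤ g u := fun u hu =>
    quantile_nonneg (fun ω => abs_nonneg (X ω)) hu.1
  calc ∫⁻ u in Ioo 0 1, ENNReal.ofReal |quantile P X u| ∂Q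
      ≤ ∫⁻ u in Ioo 0 1, ENNReal.ofReal (g u) + ENNReal.ofReal (g (1 - u / 2)) ∂Q :=
        lintegral_mono_ae <| hμ.mono fun u hu =>
          (ENNReal.ofReal_le_ofReal (abs_quantile_le hX hu)).trans ENNReal.ofReal_add_le
    _ = (∫⁻ u in Ioo 0 1, ENNReal.ofReal (g u) ∂Q) +
          ∫⁻ u in Ioo 0 1, ENNReal.ofReal (g (1 - u / 2)) ∂Q :=
        lintegral_add_left'
          (aemeasurable_restrict_of_monotoneOn measurableSet_Ioo hg).ennreal_ofReal _
    _ ≤ (∫⁻ u in Ioo 0 1, ENNReal.ofReal (g u) ∂Q) +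
          2 * ∫⁻ u in Ioo 0 1, ENNReal.ofReal (g u) ∂Q := by
        gcongr
        exact lintegral_comp_one_sub_half_le hμ (hQ.restrict_Iic_le hD hconv) hg hg₀
    _ < ⊤ := ENNReal.add_lt_top.2 ⟨hint, ENNReal.mul_lt_top ENNReal.ofNat_lt_top hint⟩
end
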